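/- Let 0 < α < 2, c > 0, and let μ₁, μ₂ ∈ S(α, c) with associated functions β₁, β₂. Let Z₁, …, Z_n be i.i.d. with distribution μ₁ and Z₁*, …, Z_n* be i.i.d. with distribution μ₂. Let (a₁, …, a_n) ∈ ℝⁿ, A_n = (Σ_{k=1}^n |a_k|^α)^{1/α}, and δ_n = max_{1≤k≤n} |a_k| / A_n. Then for every t ∈ ℝ one has |E exp(i t A_n^{-1} Σ_{k=1}^n a_k Z_k) − E exp(i t A_n^{-1} Σ_{k=1}^n a_k Z_k*)| ≤ |t|^α · sup_{|x| ≤ |t|δ_n} |β₁(x) − β₂(x)|. -/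

import Mathlib

open MeasureTheory Filter Finset
open scoped Topology BoundedContinuousFunction ENNReal

/-- The characteristic function of a measure on `ℝ`. -/
noncomputable def charFn (μ : Measure ℝ) (t : ℝ) : ℂ :=
  ∫ x, Complex.exp (Complex.I * (t * x)) ∂μ

/-- `μ ∈ S(α, c)`: `μ` is a symmetric probability distribution on `ℝ` whose characteristic
function satisfies `φ(t) = 1 - c|t|^α + o(|t|^α)` as `t → 0`. -/
def MemS (α c : ℝ) (μ : Measure ℝ) : Prop :=
  IsProbabilityMeasure μ ∧ μ.map (fun x => -x) = μ ∧
    Asymptotics.IsLittleO (𝓝 (0 : ℝ))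
      (fun t : ℝ => charFn μ t - ((1 - c * |t| ^ α : ℝ) : ℂ))
      (fun t : ℝ => |t| ^ α)

/-- `β` is the function associated with `μ ∈ S(α, c)`:
`φ(t) = 1 - c|t|^α + β(t)|t|^α` with `β` bounded continuous and `β 0 = 0`. -/
structure IsAssocFn (α c : ℝ) (μ : Measure ℝ) (β : ℝ → ℝ) : Prop where
  continuous : Continuous β
  bounded : ∃ M : ℝ, ∀ t, |β t| ≤ M
  zero : β 0 = 0
  eq : ∀ t : ℝ, charFn μ t = ((1 - c * |t| ^ α + β t * |t| ^ α : ℝ) : ℂ)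

/-- The metric `ρ` on `S(α, c)`, expressed in terms of the associated functions. -/
noncomputable def rho (β₁ β₂ : ℝ → ℝ) : ℝ :=
  (⨆ t : {t : ℝ // |t| ≤ 1}, |β₁ t.1 - β₂ t.1|) +
    ∑' k : ℕ, (2 ^ k : ℝ)⁻¹ *
      ⨆ t : {t : ℝ // 2 ^ k ≤ |t| ∧ |t| ≤ 2 ^ (k + 1)}, |β₁ t.1 - β₂ t.1|

/-- The normalization `A_N = (∑_{k=1}^N |a_k|^α)^{1/α}`. -/
noncomputable def wA (α : ℝ) (a : ℕ → ℝ) (N : ℕ) : ℝ :=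
  (∑ k ∈ Finset.range N, |a k| ^ α) ^ (1 / α)

/-- The uniform asymptotic negligibility condition `max_{1≤k≤N} |a_k| = o(A_N)`. -/
def UAN (α : ℝ) (a : ℕ → ℝ) : Prop :=
  ∀ ε > (0 : ℝ), ∃ N₀ : ℕ, ∀ N ≥ N₀, ∀ k < N, |a k| ≤ ε * wA α a N

/-- `F` is a distribution function. -/
def IsDistFun (F : ℝ → ℝ) : Prop :=
  Monotone F ∧ Tendsto F atBot (𝓝 0) ∧ Tendsto F atTop (𝓝 1)

/-- `(X_n)` is a determining sequence: relative to any set `A` of positive probability, it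
has a limit distribution `F_A`. -/
def Determining {Ω : Type*} [MeasurableSpace Ω] (P : Measure Ω) (X : ℕ → Ω → ℝ) : Prop :=
  ∀ A : Set Ω, MeasurableSet A → P A ≠ 0 →
    ∃ F : ℝ → ℝ, IsDistFun F ∧
      ∀ t : ℝ, ContinuousAt F t →
        Tendsto (fun n => (P (A ∩ {ω | X n ω < t})).toReal / (P A).toReal) atTop (𝓝 (F t))

/-- `μ` is the limit random measure of the determining sequence `(X_n)`: a measurable map to
the probability measures on `ℝ` such that for every continuity point `t` of `F_Ω` the
indicators `1{X_n ≤ t}` converge weakly in `L^∞` to `μ(-∞, t]`. -/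
def IsLimitRandomMeasure {Ω : Type*} [MeasurableSpace Ω] (P : Measure Ω)
    (X : ℕ → Ω → ℝ) (μ : Ω → Measure ℝ) : Prop :=
  (∀ ω, IsProbabilityMeasure (μ ω)) ∧
  (∀ s : Set ℝ, MeasurableSet s → Measurable fun ω => μ ω s) ∧
  ∃ F : ℝ → ℝ, IsDistFun F ∧
    (∀ t : ℝ, ContinuousAt F t →
      Tendsto (fun n => (P {ω | X n ω < t}).toReal) atTop (𝓝 (F t))) ∧
    ∀ t : ℝ, ContinuousAt F t → ∀ η : Ω → ℝ, Integrable η P →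
      Tendsto (fun n => ∫ ω, ({ω' | X n ω' ≤ t}.indicator (fun _ => (1 : ℝ)) ω) * η ω ∂P)
        atTop (𝓝 (∫ ω, (μ ω (Set.Iic t)).toReal * η ω ∂P))

/-! Both expectations factor over the independent summands into products of the characteristic
functions `φ₁`, `φ₂` at the points `b_k = a_k t / A_n`. All factors have modulus at most one, so the
difference of the products is at most `∑ |φ₁(b_k) - φ₂(b_k)| = ∑ |β₁(b_k) - β₂(b_k)| |b_k|^α`, where
`|b_k| ≤ |t| δ_n` and `∑ |b_k|^α ≤ |t|^α` by the choice of `A_n`. -/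

open ProbabilityTheory

lemma charFn_eq_charFun (μ : Measure ℝ) : charFn μ = charFun μ := by
  ext t
  simp only [charFn, charFun_apply_real]
  congr with x
  ring_nf

lemma integral_cexp_I_mul_eq_charFun_map {Ω : Type*} [MeasurableSpace Ω] {P : Measure Ω}
    {X : Ω → ℝ} (hX : AEMeasurable X P) (t : ℝ) :
    ∫ ω, Complex.exp (Complex.I * ((t * X ω : ℝ) : ℂ)) ∂P = charFun (P.map X) t := by
  rw [charFun_apply_real, integral_map hX (by fun_prop)]
  congr with ω
  push_cast
  ring_nf

lemma iIndepFun.integral_cexp_I_mul_sum {Ω ι : Type*} [Fintype ι] [MeasurableSpace Ω]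
    {P : Measure Ω} {Z : ι → Ω → ℝ} (hZ : ∀ i, Measurable (Z i)) (hind : iIndepFun Z P)
    (a : ι → ℝ) (r t : ℝ) :
    ∫ ω, Complex.exp (Complex.I * ((t * (r * ∑ i, a i * Z i ω) : ℝ) : ℂ)) ∂P
      = ∏ i, charFun (P.map (Z i)) (a i * (r * t)) := by
  have hsum : Measurable fun ω => ∑ i, a i * Z i ω :=
    Finset.measurable_fun_sum _ fun i _ => (hZ i).const_mul (a i)
  have hind' : iIndepFun (fun i ω => a i * Z i ω) P :=
    hind.comp (fun i x => a i * x) fun i => measurable_const_mul (a i)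
  rw [integral_cexp_I_mul_eq_charFun_map (by fun_prop), charFun_map_mul_comp hsum.aemeasurable,
    hind'.charFun_map_fun_sum_eq_prod fun i => ((hZ i).const_mul (a i)).aemeasurable,
    Finset.prod_apply]
  exact Finset.prod_congr rfl fun i _ => charFun_map_mul_comp (hZ i).aemeasurable _ _

lemma norm_prod_sub_prod_le_sum_norm_sub {ι R : Type*} [NormedCommRing R] [NormOneClass R]
    (s : Finset ι) {x y : ι → R} (hx : ∀ i, ‖x i‖ ≤ 1) (hy : ∀ i, ‖y i‖ ≤ 1) :
    ‖∏ i ∈ s, x i - ∏ i ∈ s, y i‖ ≤ ∑ i ∈ s, ‖x i - y i‖ := by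
  classical
  induction s using Finset.induction_on with
  | empty => simp
  | @insert j s hj ih =>
    have hprod : ‖∏ i ∈ s, y i‖ ≤ 1 :=
      (Finset.norm_prod_le s y).trans
        (Finset.prod_le_one (fun _ _ => norm_nonneg _) fun i _ => hy i)
    rw [Finset.prod_insert hj, Finset.prod_insert hj, Finset.sum_insert hj]
    calc ‖x j * ∏ i ∈ s, x i - y j * ∏ i ∈ s, y i‖
        = ‖(x j - y j) * ∏ i ∈ s, y i + x j * (∏ i ∈ s, x i - ∏ i ∈ s, y i)‖ := by ring_nf
      _ ≤ ‖x j - y j‖ * ‖∏ i ∈ s, y i‖ + ‖x j‖ * ‖∏ i ∈ s, x i - ∏ i ∈ s, y i‖ :=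
        (norm_add_le _ _).trans (add_le_add (norm_mul_le _ _) (norm_mul_le _ _))
      _ ≤ ‖x j - y j‖ * 1 + 1 * ∑ i ∈ s, ‖x i - y i‖ := by
        gcongr
        exact hx j
      _ = ‖x j - y j‖ + ∑ i ∈ s, ‖x i - y i‖ := by ring

namespace IsAssocFn

variable {α c : ℝ} {μ₁ μ₂ : Measure ℝ} {β₁ β₂ : ℝ → ℝ}

lemma norm_charFn_sub (hβ₁ : IsAssocFn α c μ₁ β₁) (hβ₂ : IsAssocFn α c μ₂ β₂) (s : ℝ) :
    ‖charFn μ₁ s - charFn μ₂ s‖ = |β₁ s - β₂ s| * |s| ^ α := by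
  rw [hβ₁.eq, hβ₂.eq, ← Complex.ofReal_sub, Complex.norm_real, Real.norm_eq_abs,
    show 1 - c * |s| ^ α + β₁ s * |s| ^ α - (1 - c * |s| ^ α + β₂ s * |s| ^ α)
      = (β₁ s - β₂ s) * |s| ^ α by ring,
    abs_mul, abs_of_nonneg (Real.rpow_nonneg (abs_nonneg s) α)]

lemma bddAbove_range_abs_sub (hβ₁ : IsAssocFn α c μ₁ β₁) (hβ₂ : IsAssocFn α c μ₂ β₂)
    (S : Set ℝ) : BddAbove (Set.range fun x : S => |β₁ x - β₂ x|) := by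
  obtain ⟨M₁, hM₁⟩ := hβ₁.bounded
  obtain ⟨M₂, hM₂⟩ := hβ₂.bounded
  refine ⟨M₁ + M₂, ?_⟩
  rintro _ ⟨x, rfl⟩
  exact (abs_sub _ _).trans (add_le_add (hM₁ x) (hM₂ x))

lemma norm_prod_charFn_sub_prod_le [IsProbabilityMeasure μ₁] [IsProbabilityMeasure μ₂]
    (hβ₁ : IsAssocFn α c μ₁ β₁) (hβ₂ : IsAssocFn α c μ₂ β₂) {ι : Type*} [Fintype ι]
    {b : ι → ℝ} {r : ℝ} (hb : ∀ i, |b i| ≤ r) :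
    ‖∏ i, charFn μ₁ (b i) - ∏ i, charFn μ₂ (b i)‖
      ≤ (∑ i, |b i| ^ α) * ⨆ x : {x : ℝ // |x| ≤ r}, |β₁ x - β₂ x| := by
  have hnorm : ∀ (μ : Measure ℝ) [IsProbabilityMeasure μ] (s : ℝ), ‖charFn μ s‖ ≤ 1 :=
    fun μ _ s => charFn_eq_charFun μ ▸ norm_charFun_le_one s
  calc ‖∏ i, charFn μ₁ (b i) - ∏ i, charFn μ₂ (b i)‖
      ≤ ∑ i, ‖charFn μ₁ (b i) - charFn μ₂ (b i)‖ :=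
        norm_prod_sub_prod_le_sum_norm_sub _ (fun i => hnorm μ₁ _) fun i => hnorm μ₂ _
    _ = ∑ i, |b i| ^ α * |β₁ (b i) - β₂ (b i)| := by
        simp only [norm_charFn_sub hβ₁ hβ₂, mul_comm]
    _ ≤ ∑ i, |b i| ^ α * ⨆ x : {x : ℝ // |x| ≤ r}, |β₁ x - β₂ x| := by
        gcongr with i
        exact le_ciSup (bddAbove_range_abs_sub hβ₁ hβ₂ _) ⟨b i, hb i⟩
    _ = (∑ i, |b i| ^ α) * ⨆ x : {x : ℝ // |x| ≤ r}, |β₁ x - β₂ x| := by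
        rw [Finset.sum_mul]

end IsAssocFn

lemma sum_abs_mul_inv_rpow_mul_le {ι : Type*} [Fintype ι] {α : ℝ} (hα : α ≠ 0)
    (a : ι → ℝ) (t : ℝ) :
    ∑ i, |a i * (((∑ j, |a j| ^ α) ^ (1 / α))⁻¹ * t)| ^ α ≤ |t| ^ α := by
  set S := ∑ j, |a j| ^ α
  have hS : 0 ≤ S := by positivity
  have hAS : ((S ^ (1 / α))⁻¹) ^ α = S⁻¹ := by
    rw [Real.inv_rpow (by positivity), one_div, Real.rpow_inv_rpow hS hα]
  calc ∑ i, |a i * ((S ^ (1 / α))⁻¹ * t)| ^ α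
      = S⁻¹ * S * |t| ^ α := by
        simp only [abs_mul, abs_inv, abs_of_nonneg (Real.rpow_nonneg hS _)]
        rw [Finset.mul_sum, Finset.sum_mul]
        refine Finset.sum_congr rfl fun i _ => ?_
        rw [Real.mul_rpow (abs_nonneg _) (by positivity),
          Real.mul_rpow (by positivity) (abs_nonneg _), hAS]
        ring
    _ ≤ |t| ^ α := mul_le_of_le_one_left (by positivity) (inv_mul_le_one_of_le₀ le_rfl hS)

theorem statement3_general
    {Ω : Type*} [MeasurableSpace Ω] (P : Measure Ω) [IsProbabilityMeasure P]
    (α c : ℝ) (hα : 0 < α)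
    (μ₁ μ₂ : Measure ℝ) (β₁ β₂ : ℝ → ℝ)
    (h1 : MemS α c μ₁) (h2 : MemS α c μ₂)
    (hβ₁ : IsAssocFn α c μ₁ β₁) (hβ₂ : IsAssocFn α c μ₂ β₂)
    (n : ℕ) (hn : 0 < n) (a : Fin n → ℝ)
    (Z Zstar : Fin n → Ω → ℝ)
    (hZmeas : ∀ i, Measurable (Z i))
    (hZind : ProbabilityTheory.iIndepFun Z P)
    (hZlaw : ∀ i, P.map (Z i) = μ₁)
    (hZsmeas : ∀ i, Measurable (Zstar i))
    (hZsind : ProbabilityTheory.iIndepFun Zstar P)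
    (hZslaw : ∀ i, P.map (Zstar i) = μ₂)
    (t : ℝ) :
    ‖((∫ ω, Complex.exp (Complex.I *
          ((t * (((∑ i, |a i| ^ α) ^ (1 / α))⁻¹ * ∑ i, a i * Z i ω) : ℝ))) ∂P) -
        ∫ ω, Complex.exp (Complex.I *
          ((t * (((∑ i, |a i| ^ α) ^ (1 / α))⁻¹ * ∑ i, a i * Zstar i ω) : ℝ))) ∂P)‖
      ≤ |t| ^ α *
        ⨆ x : {x : ℝ // |x| ≤ |t| *
          ((Finset.univ.sup' (Finset.univ_nonempty_iff.mpr (Fin.pos_iff_nonempty.mp hn))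
            fun i => |a i|) / (∑ i, |a i| ^ α) ^ (1 / α))}, |β₁ x.1 - β₂ x.1| := by
  have : IsProbabilityMeasure μ₁ := h1.1
  have : IsProbabilityMeasure μ₂ := h2.1
  set A := (∑ i, |a i| ^ α) ^ (1 / α)
  set M := Finset.univ.sup' (Finset.univ_nonempty_iff.mpr (Fin.pos_iff_nonempty.mp hn))
    fun i => |a i|
  set b : Fin n → ℝ := fun i => a i * (A⁻¹ * t)
  have hA : 0 ≤ A := Real.rpow_nonneg (by positivity) _
  have hb : ∀ i, |b i| ≤ |t| * (M / A) := fun i => calc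
    |b i| = |a i| * (A⁻¹ * |t|) := by simp only [b, abs_mul, abs_inv, abs_of_nonneg hA]
    _ ≤ M * (A⁻¹ * |t|) := by gcongr; exact Finset.le_sup' (fun j => |a j|) (Finset.mem_univ i)
    _ = |t| * (M / A) := by ring
  rw [iIndepFun.integral_cexp_I_mul_sum hZmeas hZind,
    iIndepFun.integral_cexp_I_mul_sum hZsmeas hZsind]
  simp only [hZlaw, hZslaw, ← charFn_eq_charFun]
  calc _ ≤ (∑ i, |b i| ^ α) * ⨆ x : {x : ℝ // |x| ≤ |t| * (M / A)}, |β₁ x - β₂ x| :=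
        hβ₁.norm_prod_charFn_sub_prod_le hβ₂ hb
    _ ≤ |t| ^ α * ⨆ x : {x : ℝ // |x| ≤ |t| * (M / A)}, |β₁ x - β₂ x| :=
        mul_le_mul_of_nonneg_right (sum_abs_mul_inv_rpow_mul_le hα.ne' a t)
          (Real.iSup_nonneg fun _ => abs_nonneg _)

/-- **Remark after Lemma 1.** With the notation of Lemma 1, for any `t ∈ ℝ`,
`|E exp(it A_n⁻¹ ∑ a_k Z_k) - E exp(it A_n⁻¹ ∑ a_k Z_k*)| ≤ |t|^α sup_{|x| ≤ |t|δ_n} |β₁(x) - β₂(x)|`. -/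
theorem statement3
    {Ω : Type*} [MeasurableSpace Ω] (P : Measure Ω) [IsProbabilityMeasure P]
    (α c : ℝ) (hα : 0 < α) (hα2 : α < 2) (hc : 0 < c)
    (μ₁ μ₂ : Measure ℝ) (β₁ β₂ : ℝ → ℝ)
    (h1 : MemS α c μ₁) (h2 : MemS α c μ₂)
    (hβ₁ : IsAssocFn α c μ₁ β₁) (hβ₂ : IsAssocFn α c μ₂ β₂)
    (n : ℕ) (hn : 0 < n) (a : Fin n → ℝ)
    (Z Zstar : Fin n → Ω → ℝ)
    (hZmeas : ∀ i, Measurable (Z i))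
    (hZind : ProbabilityTheory.iIndepFun Z P)
    (hZlaw : ∀ i, P.map (Z i) = μ₁)
    (hZsmeas : ∀ i, Measurable (Zstar i))
    (hZsind : ProbabilityTheory.iIndepFun Zstar P)
    (hZslaw : ∀ i, P.map (Zstar i) = μ₂)
    (t : ℝ) :
    ‖((∫ ω, Complex.exp (Complex.I *
          ((t * (((∑ i, |a i| ^ α) ^ (1 / α))⁻¹ * ∑ i, a i * Z i ω) : ℝ))) ∂P) -
        ∫ ω, Complex.exp (Complex.I *
          ((t * (((∑ i, |a i| ^ α) ^ (1 / α))⁻¹ * ∑ i, a i * Zstar i ω) : ℝ))) ∂P)‖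
      ≤ |t| ^ α *
        ⨆ x : {x : ℝ // |x| ≤ |t| *
          ((Finset.univ.sup' (Finset.univ_nonempty_iff.mpr (Fin.pos_iff_nonempty.mp hn))
            fun i => |a i|) / (∑ i, |a i| ^ α) ^ (1 / α))}, |β₁ x.1 - β₂ x.1| :=
  statement3_general P α c hα μ₁ μ₂ β₁ β₂ h1 h2 hβ₁ hβ₂ n hn a Z Zstar hZmeas hZind hZlaw hZsmeas
    hZsind hZslaw t
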